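/- arXiv:1708.02416 — 5 statements merged into one kernel-verified Lean document; each statement's English description precedes it below -/
import Mathlib

section
/- If G is a connected simple graph on n ≥ 2 vertices, then sg(G) = n if and only if G is isomorphic to the complete graph K_n. -/
/-!
Dropping a vertex `b` that lies strictly inside some geodesic from `u` to `w` leaves a strong
geodetic set: choose that geodesic for the pair `(u, w)` and arbitrary geodesics elsewhere.
Conversely, a vertex inside no geodesic can only be covered as an endpoint, so it belongs to
every strong geodetic set. Hence `sg(G) = n` exactly when no vertex lies inside a geodesic,
which happens exactly when any two distinct vertices are adjacent.
-/

open SimpleGraph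

/-- `S` is a strong geodetic set of `G` if one can fix, for each pair of vertices of `S`,
a geodesic (shortest path) between them, so that every vertex of `G` lies on one of the
chosen geodesics. -/
def SimpleGraph.IsStrongGeodeticSet {V : Type*} (G : SimpleGraph V) (S : Set V) : Prop :=
  ∃ g : ∀ x ∈ S, ∀ y ∈ S, G.Walk x y,
    (∀ x hx y hy, (g x hx y hy).length = G.dist x y) ∧
    ∀ v : V, ∃ x hx y hy, v ∈ (g x hx y hy).support

/-- The strong geodetic number of a graph: the minimum cardinality of a strong geodetic set. -/
noncomputable def SimpleGraph.strongGeodeticNumber {V : Type*} [Fintype V]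
    (G : SimpleGraph V) : ℕ :=
  sInf {n | ∃ S : Finset V, G.IsStrongGeodeticSet ↑S ∧ S.card = n}

namespace SimpleGraph

variable {V : Type*} {G : SimpleGraph V}

def IsGeodesicInterior (G : SimpleGraph V) (v : V) : Prop :=
  ∃ u w : V, ∃ p : G.Walk u w, p.length = G.dist u w ∧ v ∈ p.support ∧ v ≠ u ∧ v ≠ w

lemma Walk.eq_or_eq_of_mem_support_of_length_le_one {u w v : V} {p : G.Walk u w}
    (hp : p.length ≤ 1) (hv : v ∈ p.support) : v = u ∨ v = w := by
  cases p with
  | nil => simp_all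
  | cons _ q =>
    cases q with
    | nil => simp_all
    | cons _ _ => simp at hp

lemma not_isGeodesicInterior_top (v : V) : ¬ (⊤ : SimpleGraph V).IsGeodesicInterior v := by
  rintro ⟨u, w, p, hp, hv, hvu, hvw⟩
  have hp₁ : p.length ≤ 1 := by
    classical
    rw [hp, dist_top]
    split_ifs <;> omega
  rcases p.eq_or_eq_of_mem_support_of_length_le_one hp₁ hv with rfl | rfl <;> contradiction

lemma exists_isGeodesicInterior_of_not_adj {u w : V} (huw : G.Reachable u w) (hne : u ≠ w)
    (hnadj : ¬ G.Adj u w) : ∃ b, G.IsGeodesicInterior b := by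
  obtain ⟨p, hp⟩ := huw.exists_walk_length_eq_dist
  cases p with
  | nil => exact absurd rfl hne
  | @cons _ b _ h q =>
    exact ⟨b, u, w, .cons h q, hp, by simp, h.ne', by rintro rfl; exact hnadj h⟩

lemma Preconnected.exists_isGeodesicInterior_iff (hG : G.Preconnected) :
    (∃ v, G.IsGeodesicInterior v) ↔ G ≠ ⊤ := by
  refine ⟨?_, fun h => ?_⟩
  · rintro ⟨v, hv⟩ rfl
    exact not_isGeodesicInterior_top v hv
  · obtain ⟨u, w, hne, hnadj⟩ := ne_top_iff_exists_not_adj.mp h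
    exact exists_isGeodesicInterior_of_not_adj (hG u w) hne hnadj

lemma IsStrongGeodeticSet.eq_univ {S : Set V} (hS : G.IsStrongGeodeticSet S)
    (h : ∀ v, ¬ G.IsGeodesicInterior v) : S = Set.univ := by
  obtain ⟨g, hg, hcover⟩ := hS
  refine Set.eq_univ_of_forall fun v => ?_
  obtain ⟨x, hx, y, hy, hv⟩ := hcover v
  by_contra hvS
  exact h v ⟨x, y, g x hx y hy, hg x hx y hy, hv, by rintro rfl; exact hvS hx,
    by rintro rfl; exact hvS hy⟩

lemma Preconnected.isStrongGeodeticSet_univ (hG : G.Preconnected) :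
    G.IsStrongGeodeticSet Set.univ := by
  choose g hg using fun x y => (hG x y).exists_walk_length_eq_dist
  exact ⟨fun x _ y _ => g x y, fun x _ y _ => hg x y,
    fun v => ⟨v, trivial, v, trivial, (g v v).start_mem_support⟩⟩

lemma Preconnected.isStrongGeodeticSet_compl_singleton (hG : G.Preconnected) {b : V}
    (hb : G.IsGeodesicInterior b) : G.IsStrongGeodeticSet {b}ᶜ := by
  obtain ⟨u, w, p, hp, hbp, hbu, hbw⟩ := hb
  have geodesic : ∀ x y : V, ∃ r : G.Walk x y,
      r.length = G.dist x y ∧ (x = u → y = w → b ∈ r.support) := by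
    intro x y
    by_cases hxy : x = u ∧ y = w
    · obtain ⟨rfl, rfl⟩ := hxy
      exact ⟨p, hp, fun _ _ => hbp⟩
    · obtain ⟨r, hr⟩ := (hG x y).exists_walk_length_eq_dist
      exact ⟨r, hr, fun hx hy => absurd ⟨hx, hy⟩ hxy⟩
  choose g hg hgb using geodesic
  refine ⟨fun x _ y _ => g x y, fun x _ y _ => hg x y, fun v => ?_⟩
  by_cases hv : v = b
  · subst hv
    exact ⟨u, hbu.symm, w, hbw.symm, hgb u w rfl rfl⟩
  · exact ⟨v, hv, v, hv, (g v v).start_mem_support⟩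

section Fintype

variable [Fintype V]

lemma strongGeodeticNumber_le_card {S : Finset V} (hS : G.IsStrongGeodeticSet S) :
    G.strongGeodeticNumber ≤ S.card :=
  Nat.sInf_le ⟨S, hS, rfl⟩

lemma Preconnected.strongGeodeticNumber_eq_card_iff (hG : G.Preconnected) :
    G.strongGeodeticNumber = Fintype.card V ↔ ∀ v, ¬ G.IsGeodesicInterior v := by
  classical
  refine ⟨fun hsg v hv => ?_, fun h => le_antisymm ?_ ?_⟩
  · have hle := strongGeodeticNumber_le_card (S := {v}ᶜ)
      (by simpa using hG.isStrongGeodeticSet_compl_singleton hv)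
    rw [Finset.card_compl, Finset.card_singleton] at hle
    have : 0 < Fintype.card V := Fintype.card_pos_iff.mpr ⟨v⟩
    omega
  · simpa using strongGeodeticNumber_le_card (S := Finset.univ)
      (by simpa using hG.isStrongGeodeticSet_univ)
  · refine le_csInf ⟨_, Finset.univ, by simpa using hG.isStrongGeodeticSet_univ, rfl⟩ ?_
    rintro n ⟨S, hS, rfl⟩
    rw [Finset.coe_eq_univ.mp (hS.eq_univ h), Finset.card_univ]

end Fintype

lemma Iso.eq_top {W : Type*} (f : G ≃g completeGraph W) : G = ⊤ := by
  ext x y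
  rw [top_adj, ← f.map_adj_iff, ← f.injective.ne_iff]
  exact Iff.rfl

end SimpleGraph

theorem sg_eq_card_iff_complete_general {V : Type*} [Fintype V] (G : SimpleGraph V)
    (hconn : G.Connected) :
    G.strongGeodeticNumber = Fintype.card V ↔
      Nonempty (G ≃g completeGraph (Fin (Fintype.card V))) := by
  rw [hconn.preconnected.strongGeodeticNumber_eq_card_iff, ← not_exists,
    hconn.preconnected.exists_isGeodesicInterior_iff, not_not]
  exact ⟨by rintro rfl; exact ⟨Iso.completeGraph (Fintype.equivFin V)⟩, fun ⟨f⟩ => f.eq_top⟩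

/-- If `G` is a connected simple graph on `n ≥ 2` vertices, then `sg(G) = n` iff `G ≅ K_n`. -/
theorem sg_eq_card_iff_complete {V : Type*} [Fintype V] (G : SimpleGraph V)
    (hconn : G.Connected) (hn : 2 ≤ Fintype.card V) :
    G.strongGeodeticNumber = Fintype.card V ↔
      Nonempty (G ≃g completeGraph (Fin (Fintype.card V))) :=
  sg_eq_card_iff_complete_general G hconn
end

section
/- Let n ≥ 6 and let K_{n,n} have bipartition (X, Y). Suppose T = T₁ ∪ T₂ is a strong geodetic set of K_{n,n} with T₁ ⊆ X, T₂ ⊆ Y, t₁ = |T₁|, t₂ = |T₂|, and |t₁ − t₂| ≥ 2. Then there exists a strong geodetic set T' = T'₁ ∪ T'₂ of K_{n,n} with T'₁ ⊆ X, T'₂ ⊆ Y such that |T'| = |T| and ||T'₁| − |T'₂|| < |t₁ − t₂|. -/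
/-!
Every geodesic of `K_{n,n}` has length at most two, so a vertex of `Y \ T₂` can only be covered
as the middle vertex of a geodesic between two distinct vertices of `T₁`, and each such geodesic
has a single middle vertex; conversely, any assignment of middle vertices is realised by a
geodesic selection. Hence `T` is strong geodetic exactly when `n - t₂ ≤ t₁ (t₁ - 1)` and
`n - t₁ ≤ t₂ (t₂ - 1)`, and these inequalities survive moving one vertex from the larger part to
the smaller one (two vertices when the smaller part is empty).
-/

open SimpleGraph

open Finset Sum

namespace SimpleGraph

variable {V : Type*} {G : SimpleGraph V} {u v w x : V}

lemma dist_eq_two_of_adj_of_adj (hne : u ≠ v) (hnadj : ¬ G.Adj u v) (hu : G.Adj u w)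
    (hv : G.Adj w v) : G.dist u v = 2 := by
  simp [dist, edist_eq_two_iff.mpr ⟨hne, hnadj, w, hu, hv.symm⟩]

lemma Walk.eq_getVert_one_of_mem_support (p : G.Walk u v) (hp : p.length ≤ 2)
    (hx : x ∈ p.support) (hxu : x ≠ u) (hxv : x ≠ v) : p.length = 2 ∧ p.getVert 1 = x := by
  obtain ⟨i, rfl, hi⟩ := Walk.mem_support_iff_exists_getVert.mp hx
  have hi0 : i ≠ 0 := by rintro rfl; exact hxu p.getVert_zero
  have hil : i ≠ p.length := by rintro rfl; exact hxv p.getVert_length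
  obtain rfl : i = 1 := by omega
  exact ⟨by omega, rfl⟩

lemma IsStrongGeodeticSet.exists_midpoint {S : Set V} (hS : G.IsStrongGeodeticSet S)
    (hG : ∀ x y, G.dist x y ≤ 2) :
    ∃ M : V → V → V, ∀ v ∉ S, ∃ x ∈ S, ∃ y ∈ S, x ≠ y ∧ G.Adj x v ∧ G.Adj v y ∧ M x y = v := by
  classical
  obtain ⟨g, hlen, hcov⟩ := hS
  refine ⟨fun x y ↦ if h : x ∈ S ∧ y ∈ S then (g x h.1 y h.2).getVert 1 else x, fun v hv ↦ ?_⟩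
  obtain ⟨x, hx, y, hy, hvg⟩ := hcov v
  set p := g x hx y hy
  obtain ⟨hp, hmid⟩ := p.eq_getVert_one_of_mem_support ((hlen x hx y hy).trans_le (hG x y)) hvg
    (ne_of_mem_of_not_mem hx hv).symm (ne_of_mem_of_not_mem hy hv).symm
  refine ⟨x, hx, y, hy, ?_, ?_, ?_, by simp [hx, hy, p, hmid]⟩
  · rintro rfl
    exact absurd ((hp.symm.trans (hlen x hx x hy)).trans dist_self) two_ne_zero
  · simpa [hmid, p.getVert_zero] using p.adj_getVert_succ (i := 0) (by omega)
  · have h := p.adj_getVert_succ (i := 1) (by omega)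
    rwa [hmid, show 1 + 1 = p.length by omega, p.getVert_length] at h

end SimpleGraph

lemma Finset.exists_surjOn_of_card_le {α β : Type*} [Nonempty β] {s : Finset α} {t : Finset β}
    (h : #t ≤ #s) : ∃ f : α → β, Set.SurjOn f s t := by
  obtain ⟨e⟩ := Function.Embedding.nonempty_of_card_le (α := t) (β := s) (by simpa using h)
  have he : Function.Injective fun b : t ↦ (e b : α) := Subtype.val_injective.comp e.injective
  refine ⟨Function.extend (fun b : t ↦ (e b : α)) (fun b ↦ b) fun _ ↦ Classical.arbitrary β,
    fun b hb ↦ ⟨e ⟨b, hb⟩, (e ⟨b, hb⟩).2, he.extend_apply _ _ ⟨b, hb⟩⟩⟩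

lemma Finset.image_inl_union_image_inr {α β : Type*} [DecidableEq α] [DecidableEq β]
    (s : Finset α) (t : Finset β) :
    s.image inl ∪ t.image inr = s.disjSum t := by
  ext (a | b) <;> simp

namespace completeBipartiteGraph

variable {α β : Type*}

lemma adj_inl_inr (a : α) (b : β) : (completeBipartiteGraph α β).Adj (inl a) (inr b) := by simp

lemma adj_inr_inl (a : α) (b : β) : (completeBipartiteGraph α β).Adj (inr b) (inl a) := by simp

lemma dist_le_two [Nonempty α] [Nonempty β] (x y : α ⊕ β) :
    (completeBipartiteGraph α β).dist x y ≤ 2 := by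
  obtain ⟨a₀⟩ := ‹Nonempty α›
  obtain ⟨b₀⟩ := ‹Nonempty β›
  rcases x with a | b <;> rcases y with a' | b'
  · exact (dist_le (.cons (adj_inl_inr a b₀) (.cons (adj_inr_inl a' b₀) .nil))).trans (by simp)
  · exact (dist_le (adj_inl_inr a b').toWalk).trans (by simp)
  · exact (dist_le (adj_inr_inl a' b).toWalk).trans (by simp)
  · exact (dist_le (.cons (adj_inr_inl a₀ b) (.cons (adj_inl_inr a₀ b') .nil))).trans (by simp)

variable [DecidableEq α] [DecidableEq β] (m₁ : α × α → β) (m₂ : β × β → α)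

def geodesic : ∀ x y : α ⊕ β, (completeBipartiteGraph α β).Walk x y
  | inl a, inl a' =>
    if h : a = a' then Walk.nil.copy rfl (congrArg inl h)
    else .cons (adj_inl_inr a (m₁ (a, a'))) (.cons (adj_inr_inl a' (m₁ (a, a'))) .nil)
  | inl a, inr b => (adj_inl_inr a b).toWalk
  | inr b, inl a => (adj_inr_inl a b).toWalk
  | inr b, inr b' =>
    if h : b = b' then Walk.nil.copy rfl (congrArg inr h)
    else .cons (adj_inr_inl (m₂ (b, b')) b) (.cons (adj_inl_inr (m₂ (b, b')) b') .nil)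

lemma length_geodesic (x y : α ⊕ β) :
    (geodesic m₁ m₂ x y).length = (completeBipartiteGraph α β).dist x y := by
  rcases x with a | b <;> rcases y with a' | b'
  · by_cases h : a = a'
    · subst h; simp [geodesic]
    · simp only [geodesic, h, dite_false, Walk.length_cons, Walk.length_nil]
      exact (dist_eq_two_of_adj_of_adj (by simpa) (by simp) (adj_inl_inr a (m₁ (a, a')))
        (adj_inr_inl a' _)).symm
  · simpa [geodesic] using (dist_eq_one_iff_adj.mpr (adj_inl_inr a b')).symm
  · simpa [geodesic] using (dist_eq_one_iff_adj.mpr (adj_inr_inl a' b)).symm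
  · by_cases h : b = b'
    · subst h; simp [geodesic]
    · simp only [geodesic, h, dite_false, Walk.length_cons, Walk.length_nil]
      exact (dist_eq_two_of_adj_of_adj (by simpa) (by simp) (adj_inr_inl (m₂ (b, b')) b)
        (adj_inl_inr _ b')).symm

lemma inr_mem_support_geodesic {a a' : α} (h : a ≠ a') :
    inr (m₁ (a, a')) ∈ (geodesic m₁ m₂ (inl a) (inl a')).support := by
  simp [geodesic, h]

lemma inl_mem_support_geodesic {b b' : β} (h : b ≠ b') :
    inl (m₂ (b, b')) ∈ (geodesic m₁ m₂ (inr b) (inr b')).support := by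
  simp [geodesic, h]

variable [Fintype α] [Fintype β] [Nonempty α] [Nonempty β] {A : Finset α} {B : Finset β}

lemma card_compl_le_card_offDiag_of_isStrongGeodeticSet
    (hS : (completeBipartiteGraph α β).IsStrongGeodeticSet ↑(A.disjSum B)) :
    #Bᶜ ≤ #A.offDiag ∧ #Aᶜ ≤ #B.offDiag := by
  obtain ⟨M, hM⟩ := hS.exists_midpoint dist_le_two
  constructor
  · rw [← card_map Function.Embedding.inr]
    refine card_le_card_of_surjOn (fun p ↦ M (inl p.1) (inl p.2)) ?_
    intro v hv
    obtain ⟨b, hb, rfl⟩ := Finset.mem_map.mp hv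
    obtain ⟨x, hx, y, hy, hxy, hxv, hvy, hMxy⟩ := hM (inr b) (by simpa using hb)
    obtain ⟨a, rfl⟩ : ∃ a, x = inl a := by cases x <;> simp_all
    obtain ⟨a', rfl⟩ : ∃ a', y = inl a' := by cases y <;> simp_all
    exact ⟨(a, a'), by simp_all, hMxy⟩
  · rw [← card_map Function.Embedding.inl]
    refine card_le_card_of_surjOn (fun p ↦ M (inr p.1) (inr p.2)) ?_
    intro v hv
    obtain ⟨a, ha, rfl⟩ := Finset.mem_map.mp hv
    obtain ⟨x, hx, y, hy, hxy, hxv, hvy, hMxy⟩ := hM (inl a) (by simpa using ha)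
    obtain ⟨b, rfl⟩ : ∃ b, x = inr b := by cases x <;> simp_all
    obtain ⟨b', rfl⟩ : ∃ b', y = inr b' := by cases y <;> simp_all
    exact ⟨(b, b'), by simp_all, hMxy⟩

lemma isStrongGeodeticSet_of_card_compl_le_card_offDiag (h₁ : #Bᶜ ≤ #A.offDiag)
    (h₂ : #Aᶜ ≤ #B.offDiag) :
    (completeBipartiteGraph α β).IsStrongGeodeticSet ↑(A.disjSum B) := by
  obtain ⟨m₁, hm₁⟩ := exists_surjOn_of_card_le h₁
  obtain ⟨m₂, hm₂⟩ := exists_surjOn_of_card_le h₂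
  refine ⟨fun x _ y _ ↦ geodesic m₁ m₂ x y, fun x _ y _ ↦ length_geodesic m₁ m₂ x y, fun v ↦ ?_⟩
  by_cases hv : v ∈ (A.disjSum B : Set (α ⊕ β))
  · exact ⟨v, hv, v, hv, Walk.start_mem_support _⟩
  rcases v with a | b
  · obtain ⟨⟨b, b'⟩, hbb', rfl⟩ := hm₂ (show a ∈ (Aᶜ : Finset α) by simpa using hv)
    obtain ⟨hb, hb', hne⟩ := mem_offDiag.mp hbb'
    exact ⟨inr b, by simpa, inr b', by simpa, inl_mem_support_geodesic m₁ m₂ hne⟩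
  · obtain ⟨⟨a, a'⟩, haa', rfl⟩ := hm₁ (show b ∈ (Bᶜ : Finset β) by simpa using hv)
    obtain ⟨ha, ha', hne⟩ := mem_offDiag.mp haa'
    exact ⟨inl a, by simpa, inl a', by simpa, inr_mem_support_geodesic m₁ m₂ hne⟩

theorem isStrongGeodeticSet_disjSum_iff :
    (completeBipartiteGraph α β).IsStrongGeodeticSet ↑(A.disjSum B) ↔
      #Bᶜ ≤ #A.offDiag ∧ #Aᶜ ≤ #B.offDiag :=
  ⟨card_compl_le_card_offDiag_of_isStrongGeodeticSet,
    fun h ↦ isStrongGeodeticSet_of_card_compl_le_card_offDiag h.1 h.2⟩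

end completeBipartiteGraph

/-- The conditions `n - t₂ ≤ t₁ (t₁ - 1)` and `n - t₁ ≤ t₂ (t₂ - 1)` on the part sizes of a
strong geodetic set of `K_{n,n}`, written without truncated subtraction. -/
def IsStrongGeodeticProfile (n t₁ t₂ : ℕ) : Prop :=
  t₁ ≤ n ∧ t₂ ≤ n ∧ n + t₁ ≤ t₂ + t₁ * t₁ ∧ n + t₂ ≤ t₁ + t₂ * t₂

lemma completeBipartiteGraph.isStrongGeodeticSet_disjSum_iff_profile {n : ℕ} [NeZero n]
    {A B : Finset (Fin n)} :
    (completeBipartiteGraph (Fin n) (Fin n)).IsStrongGeodeticSet ↑(A.disjSum B) ↔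
      IsStrongGeodeticProfile n #A #B := by
  have hA : #A ≤ n := by simpa using card_le_univ A
  have hB : #B ≤ n := by simpa using card_le_univ B
  have hAA := Nat.le_mul_self #A
  have hBB := Nat.le_mul_self #B
  rw [isStrongGeodeticSet_disjSum_iff, card_compl, card_compl, offDiag_card, offDiag_card,
    Fintype.card_fin, IsStrongGeodeticProfile]
  omega

namespace IsStrongGeodeticProfile

variable {n t₁ t₂ : ℕ}

lemma symm (h : IsStrongGeodeticProfile n t₁ t₂) : IsStrongGeodeticProfile n t₂ t₁ :=
  ⟨h.2.1, h.1, h.2.2.2, h.2.2.1⟩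

lemma exists_more_balanced_of_add_two_le (hn : 4 ≤ n) (h : IsStrongGeodeticProfile n t₁ t₂)
    (ht : t₂ + 2 ≤ t₁) :
    ∃ s₁ s₂, IsStrongGeodeticProfile n s₁ s₂ ∧ s₁ + s₂ = t₁ + t₂ ∧
      |(s₁ : ℤ) - s₂| < |(t₁ : ℤ) - t₂| := by
  obtain ⟨h₁, h₂, h₃, h₄⟩ := h
  rw [abs_of_nonneg (by omega)]
  rcases Nat.eq_zero_or_pos t₂ with rfl | ht₂
  · obtain ⟨m, rfl⟩ : ∃ m, n = m + 2 := ⟨n - 2, by omega⟩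
    refine ⟨m, 2, ⟨by omega, by omega, by nlinarith, by omega⟩, by omega,
      abs_sub_lt_iff.mpr ⟨by omega, by omega⟩⟩
  · obtain ⟨u, rfl⟩ : ∃ u, t₁ = u + 2 := ⟨t₁ - 2, by omega⟩
    refine ⟨u + 1, t₂ + 1, ⟨by omega, by omega, by nlinarith, by nlinarith⟩, by omega,
      abs_sub_lt_iff.mpr ⟨by omega, by omega⟩⟩

lemma exists_more_balanced (hn : 4 ≤ n) (h : IsStrongGeodeticProfile n t₁ t₂)
    (ht : 2 ≤ |(t₁ : ℤ) - t₂|) :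
    ∃ s₁ s₂, IsStrongGeodeticProfile n s₁ s₂ ∧ s₁ + s₂ = t₁ + t₂ ∧
      |(s₁ : ℤ) - s₂| < |(t₁ : ℤ) - t₂| := by
  rcases le_abs'.mp ht with ht | ht
  · obtain ⟨s₁, s₂, hs, hsum, hlt⟩ := h.symm.exists_more_balanced_of_add_two_le hn (by omega)
    exact ⟨s₂, s₁, hs.symm, by omega, by rwa [abs_sub_comm, abs_sub_comm (t₁ : ℤ)]⟩
  · exact h.exists_more_balanced_of_add_two_le hn (by omega)

end IsStrongGeodeticProfile

/-- Balancing lemma for strong geodetic sets of `K_{n,n}`, `n ≥ 6`: from a strong geodetic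
set `T = T₁ ∪ T₂` with `||T₁| - |T₂|| ≥ 2` one can obtain a strong geodetic set `T' = T₁' ∪ T₂'`
of the same size whose parts are strictly more balanced. -/
theorem balanced_strong_geodetic_set (n : ℕ) (hn : 6 ≤ n) (T₁ T₂ : Finset (Fin n))
    (hT : (completeBipartiteGraph (Fin n) (Fin n)).IsStrongGeodeticSet
      ((T₁.image Sum.inl ∪ T₂.image Sum.inr : Finset (Fin n ⊕ Fin n)) : Set (Fin n ⊕ Fin n)))
    (hdiff : 2 ≤ |(T₁.card : ℤ) - (T₂.card : ℤ)|) :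
    ∃ T₁' T₂' : Finset (Fin n),
      (completeBipartiteGraph (Fin n) (Fin n)).IsStrongGeodeticSet
        ((T₁'.image Sum.inl ∪ T₂'.image Sum.inr : Finset (Fin n ⊕ Fin n)) :
          Set (Fin n ⊕ Fin n)) ∧
      (T₁'.image Sum.inl ∪ T₂'.image Sum.inr : Finset (Fin n ⊕ Fin n)).card =
        (T₁.image Sum.inl ∪ T₂.image Sum.inr : Finset (Fin n ⊕ Fin n)).card ∧
      |(T₁'.card : ℤ) - (T₂'.card : ℤ)| < |(T₁.card : ℤ) - (T₂.card : ℤ)| := by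
  have : NeZero n := ⟨by omega⟩
  simp only [image_inl_union_image_inr, card_disjSum,
    completeBipartiteGraph.isStrongGeodeticSet_disjSum_iff_profile] at hT ⊢
  obtain ⟨s₁, s₂, hs, hsum, hlt⟩ := hT.exists_more_balanced (by omega) hdiff
  obtain ⟨T₁', -, hT₁'⟩ := exists_subset_card_eq (hs.1.trans_eq (card_fin n).symm)
  obtain ⟨T₂', -, hT₂'⟩ := exists_subset_card_eq (hs.2.1.trans_eq (card_fin n).symm)
  exact ⟨T₁', T₂', by rwa [hT₁', hT₂'], by rw [hT₁', hT₂', hsum], by rwa [hT₁', hT₂']⟩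
end

section
/- If G is a connected simple graph on at least 2 vertices, then sg(G) ≤ n(G) − diam(G) + 1, where n(G) is the number of vertices and diam(G) is the diameter of G. -/
open SimpleGraph

/-!
Take a diametral pair `u, v` and a shortest `u,v`-path `P`. Drop the `diam G - 1` inner
vertices of `P` from `V`: the remaining set is strong geodetic, because `P` is selected for the
pair `u, v` and covers the dropped vertices, while every other vertex `x` is covered by the
trivial geodesic selected for the pair `x, x`.
-/

namespace SimpleGraph

variable {V : Type*} {G : SimpleGraph V}

theorem IsStrongGeodeticSet.strongGeodeticNumber_le [Fintype V] {S : Finset V}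
    (hS : G.IsStrongGeodeticSet ↑S) : G.strongGeodeticNumber ≤ S.card :=
  Nat.sInf_le ⟨S, hS, rfl⟩

theorem isStrongGeodeticSet_of_geodesic (hconn : G.Connected) {S : Set V} {u v : V}
    (p : G.Walk u v) (hp : p.length = G.dist u v) (hu : u ∈ S) (hv : v ∈ S)
    (hS : ∀ w, w ∉ p.support → w ∈ S) : G.IsStrongGeodeticSet S := by
  classical
  let g : ∀ x ∈ S, ∀ y ∈ S, G.Walk x y := fun x _ y _ =>
    if h : x = u ∧ y = v then p.copy h.1.symm h.2.symm
    else (hconn.exists_walk_length_eq_dist x y).choose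
  refine ⟨g, fun x _ y _ => ?_, fun w => ?_⟩
  · by_cases h : x = u ∧ y = v
    · obtain ⟨rfl, rfl⟩ := h
      simpa [g] using hp
    · simpa [g, h] using (hconn.exists_walk_length_eq_dist x y).choose_spec
  · by_cases hw : w ∈ p.support
    · exact ⟨u, hu, v, hv, by simpa [g] using hw⟩
    · exact ⟨w, hS w hw, w, hS w hw, Walk.start_mem_support _⟩

theorem strongGeodeticNumber_le_card_sub_dist [Fintype V] (hconn : G.Connected) (u v : V) :
    G.strongGeodeticNumber ≤ Fintype.card V - G.dist u v + 1 := by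
  classical
  obtain ⟨p, hp⟩ := hconn.exists_walk_length_eq_dist u v
  set inner := p.support.toFinset \ {u, v}
  have hS : G.IsStrongGeodeticSet ↑(Finset.univ \ inner) :=
    isStrongGeodeticSet_of_geodesic hconn p hp (by simp [inner]) (by simp [inner])
      (fun w hw => by simp [inner, hw])
  have hends : ({u, v} : Finset V) ⊆ p.support.toFinset := by
    simp [Finset.insert_subset_iff]
  have hcard_inner : inner.card = G.dist u v + 1 - ({u, v} : Finset V).card := by
    rw [Finset.card_sdiff_of_subset hends,
      List.toFinset_card_of_nodup (p.isPath_of_length_eq_dist hp).support_nodup,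
      Walk.length_support, hp]
  have hcard_ends : ({u, v} : Finset V).card ≤ 2 := Finset.card_le_two
  calc G.strongGeodeticNumber ≤ (Finset.univ \ inner).card := hS.strongGeodeticNumber_le
    _ = Fintype.card V - inner.card := by rw [Finset.card_univ_sdiff]
    _ ≤ Fintype.card V - G.dist u v + 1 := by omega

end SimpleGraph

theorem sg_le_card_sub_diam_general {V : Type*} [Fintype V] (G : SimpleGraph V)
    (hconn : G.Connected) :
    G.strongGeodeticNumber ≤ Fintype.card V - G.diam + 1 := by
  have := hconn.nonempty
  obtain ⟨u, v, huv⟩ := G.exists_dist_eq_diam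
  exact huv ▸ strongGeodeticNumber_le_card_sub_dist hconn u v

/-- If `G` is a connected simple graph on at least two vertices, then
`sg(G) ≤ n(G) - diam(G) + 1`. -/
theorem sg_le_card_sub_diam {V : Type*} [Fintype V] (G : SimpleGraph V)
    (hconn : G.Connected) (hn : 2 ≤ Fintype.card V) :
    G.strongGeodeticNumber ≤ Fintype.card V - G.diam + 1 :=
  sg_le_card_sub_diam_general G hconn
end

section
/- The strong geodetic number of the Petersen graph is 4. -/
open SimpleGraph

/-- The Petersen graph, realized as the Kneser graph `K(5,2)`: vertices are the 2-element
subsets of a 5-element set, adjacent iff disjoint. -/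
def petersenGraph : SimpleGraph {s : Finset (Fin 5) // s.card = 2} where
  Adj a b := Disjoint a.val b.val
  symm := ⟨fun a b h => h.symm⟩
  loopless := by
    constructor
    intro a h
    have h0 : a.val = ∅ := disjoint_self.mp h
    have h2 := a.2
    rw [h0] at h2
    simp at h2

/-!
The Petersen graph has diameter `2`, so a geodesic meets at most one vertex besides its ends;
a strong geodetic set `S` therefore reaches at most `|S|²` vertices, and `3² < 10`.
Conversely, the four vertices containing `0` are pairwise at distance `2`, and the midpoint of
`{0, i}` and `{0, j}` is `{0, i, j}ᶜ`, so the six midpoints are the six remaining vertices.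
-/

open Finset

namespace SimpleGraph

variable {V : Type*} {G : SimpleGraph V}

theorem Walk.mem_support_of_length_le_two {u v w : V} (p : G.Walk u v) (hp : p.length ≤ 2)
    (hw : w ∈ p.support) : w = u ∨ w = p.getVert 1 ∨ w = v := by
  obtain ⟨n, rfl, hn⟩ := Walk.mem_support_iff_exists_getVert.mp hw
  have hn2 : n ≤ 2 := hn.trans hp
  interval_cases n
  · exact .inl p.getVert_zero
  · exact .inr (.inl rfl)
  · exact .inr (.inr (p.getVert_of_length_le hp))

theorem dist_eq_two {u v w : V} (hne : u ≠ v) (hnadj : ¬G.Adj u v) (huw : G.Adj u w)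
    (hwv : G.Adj w v) : G.dist u v = 2 := by
  have hle : G.dist u v ≤ 2 := by
    simpa using dist_le (.cons huw (.cons hwv .nil))
  have hreach : G.Reachable u v := ⟨.cons huw (.cons hwv .nil)⟩
  have h0 : G.dist u v ≠ 0 := fun h => hne (hreach.dist_eq_zero_iff.mp h)
  have h1 : G.dist u v ≠ 1 := fun h => hnadj (dist_eq_one_iff_adj.mp h)
  omega

/-- Every vertex is the second vertex of a chosen geodesic: of a constant one if it lies in `S`. -/
theorem IsStrongGeodeticSet.card_le_sq [Fintype V] (hdiam : ∀ x y, G.dist x y ≤ 2)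
    {S : Finset V} (hS : G.IsStrongGeodeticSet ↑S) : Fintype.card V ≤ #S ^ 2 := by
  obtain ⟨g, hlen, hcov⟩ := hS
  let second : S × S → V := fun p =>
    (g p.1 (mem_coe.mpr p.1.2) p.2 (mem_coe.mpr p.2.2)).getVert 1
  have hconst (x : V) (hx : x ∈ (↑S : Set V)) : (g x hx x hx).getVert 1 = x :=
    (g x hx x hx).getVert_of_length_le (by simp [hlen])
  have hsurj : Function.Surjective second := by
    intro v
    obtain ⟨x, hx, y, hy, hv⟩ := hcov v
    rcases (g x hx y hy).mem_support_of_length_le_two (hlen x hx y hy ▸ hdiam x y) hv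
      with rfl | hmid | rfl
    · exact ⟨(⟨v, hx⟩, ⟨v, hx⟩), hconst v hx⟩
    · exact ⟨(⟨x, hx⟩, ⟨y, hy⟩), hmid.symm⟩
    · exact ⟨(⟨v, hy⟩, ⟨v, hy⟩), hconst v hy⟩
  calc Fintype.card V ≤ Fintype.card (S × S) := Fintype.card_le_of_surjective second hsurj
    _ = #S ^ 2 := by simp [sq]

theorem strongGeodeticNumber_eq [Fintype V] {n : ℕ} (S : Finset V)
    (hS : G.IsStrongGeodeticSet ↑S) (hcard : #S = n)
    (hmin : ∀ T : Finset V, G.IsStrongGeodeticSet ↑T → n ≤ #T) :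
    G.strongGeodeticNumber = n := by
  have hn : n ∈ {n | ∃ S : Finset V, G.IsStrongGeodeticSet ↑S ∧ #S = n} :=
    ⟨S, hS, hcard⟩
  refine le_antisymm (Nat.sInf_le hn) ?_
  obtain ⟨T, hT, hTcard⟩ := Nat.sInf_mem ⟨n, hn⟩
  rw [strongGeodeticNumber, ← hTcard]
  exact hmin T hT

end SimpleGraph

abbrev PetersenVertex := {s : Finset (Fin 5) // s.card = 2}

instance : DecidableRel petersenGraph.Adj :=
  fun a b => inferInstanceAs (Decidable (Disjoint a.1 b.1))

theorem petersenVertex_card : Fintype.card PetersenVertex = 10 := by decide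

theorem card_compl_union_eq_two : ∀ s t : Finset (Fin 5), #s = 2 → #t = 2 → s ≠ t →
    ¬Disjoint s t → #(s ∪ t)ᶜ = 2 := by decide

def petersenMidpoint (x y : PetersenVertex) (hne : x ≠ y)
    (hnadj : ¬petersenGraph.Adj x y) : PetersenVertex :=
  ⟨(x.1 ∪ y.1)ᶜ,
    card_compl_union_eq_two x.1 y.1 x.2 y.2 (fun h => hne (Subtype.ext h)) hnadj⟩

theorem petersenGraph_adj_midpoint (x y : PetersenVertex) (hne : x ≠ y)
    (hnadj : ¬petersenGraph.Adj x y) : petersenGraph.Adj x (petersenMidpoint x y hne hnadj) :=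
  disjoint_compl_right.mono_left subset_union_left

theorem petersenGraph_midpoint_adj (x y : PetersenVertex) (hne : x ≠ y)
    (hnadj : ¬petersenGraph.Adj x y) : petersenGraph.Adj (petersenMidpoint x y hne hnadj) y :=
  disjoint_compl_left.mono_right subset_union_right

def petersenGeodesic (x y : PetersenVertex) : petersenGraph.Walk x y :=
  if hne : x = y then hne ▸ .nil
  else if hadj : petersenGraph.Adj x y then .cons hadj .nil
  else .cons (petersenGraph_adj_midpoint x y hne hadj)
    (.cons (petersenGraph_midpoint_adj x y hne hadj) .nil)

theorem petersenGeodesic_length (x y : PetersenVertex) :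
    (petersenGeodesic x y).length = petersenGraph.dist x y := by
  unfold petersenGeodesic
  split_ifs with hne hadj
  · subst hne; simp
  · simp [dist_eq_one_iff_adj.mpr hadj]
  · simp [dist_eq_two hne hadj (petersenGraph_adj_midpoint x y hne hadj)
      (petersenGraph_midpoint_adj x y hne hadj)]

theorem petersenGraph_dist_le_two (x y : PetersenVertex) : petersenGraph.dist x y ≤ 2 := by
  rw [← petersenGeodesic_length]
  unfold petersenGeodesic
  split_ifs with hne
  · subst hne; simp
  all_goals simp

def petersenPencil : Finset PetersenVertex := univ.filter fun v => 0 ∈ v.1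

theorem petersenPencil_isStrongGeodeticSet :
    petersenGraph.IsStrongGeodeticSet ↑petersenPencil := by
  have hcover : ∀ v, ∃ x ∈ petersenPencil, ∃ y ∈ petersenPencil,
      v ∈ (petersenGeodesic x y).support := by decide
  refine ⟨fun x _ y _ => petersenGeodesic x y, fun x _ y _ => petersenGeodesic_length x y,
    fun v => ?_⟩
  obtain ⟨x, hx, y, hy, hv⟩ := hcover v
  exact ⟨x, mem_coe.mpr hx, y, mem_coe.mpr hy, hv⟩

/-- The strong geodetic number of the Petersen graph is `4`. -/
theorem sg_petersen : petersenGraph.strongGeodeticNumber = 4 := by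
  refine strongGeodeticNumber_eq petersenPencil petersenPencil_isStrongGeodeticSet
    (by decide) fun T hT => ?_
  have h := hT.card_le_sq petersenGraph_dist_le_two
  rw [petersenVertex_card] at h
  by_contra! hlt
  have : #T ^ 2 ≤ 3 ^ 2 := Nat.pow_le_pow_left (by omega) 2
  omega
end

section
/- For every integer k ≥ 2 there exists a finite connected simple graph G with diam(G) = 2, sg(G) = k, and n(G) = k + C(k,2) vertices (so that equality is attained in the bound n(G) ≤ sg(G) + C(sg(G),2)·(diam(G) − 1)). One such graph G_k is obtained from the subdivision of the complete graph K_k — with vertex set V(K_k) ∪ E(K_k), each subdivision vertex e ∈ E(K_k) adjacent to its two endpoints in V(K_k) — by additionally joining every pair of distinct subdivision vertices e, f ∈ E(K_k) by an edge. -/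
/-!
Each original vertex `u` has the clique `{e ∣ u ∈ e}` as its neighbourhood, and a vertex whose
neighbourhood is a clique can only be an end of a geodesic, since an inner occurrence could be
short-cut. Hence every strong geodetic set contains all `k` original vertices. Conversely, two
original vertices `u ≠ v` are at distance `2` with the single common neighbour `uv`, so any choice
of geodesics between original vertices covers every subdivision vertex.
-/

open SimpleGraph

/-- The graph `G_k`: the subdivision of `K_k` (each edge of `K_k` replaced by a subdivision
vertex adjacent to its two endpoints) with every pair of distinct subdivision vertices
additionally joined by an edge. -/
def subdividedCompleteGraph (k : ℕ) :
    SimpleGraph (Fin k ⊕ {e : Sym2 (Fin k) // ¬e.IsDiag}) where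
  Adj x y :=
    match x, y with
    | Sum.inl _, Sum.inl _ => False
    | Sum.inl u, Sum.inr e => u ∈ e.val
    | Sum.inr e, Sum.inl u => u ∈ e.val
    | Sum.inr e, Sum.inr f => e ≠ f
  symm := ⟨by rintro (u | e) (v | f) h <;> simp_all <;> exact Ne.symm h⟩
  loopless := ⟨by rintro (u | e) h <;> simp_all⟩

namespace SimpleGraph

variable {V : Type*} {G : SimpleGraph V} {x y z v : V}

theorem edist_le_two_of_adj_of_adj (hxz : G.Adj x z) (hzy : G.Adj z y) : G.edist x y ≤ 2 := by
  simpa using (Walk.cons hxz (Walk.cons hzy Walk.nil)).edist_le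

theorem diam_eq_of_ediam_le_of_dist_eq {n : ℕ} (h : G.ediam ≤ n) (hxy : G.dist x y = n) :
    G.diam = n := by
  refine le_antisymm ?_ (hxy ▸ dist_le_diam (ne_top_of_le_ne_top (ENat.natCast_ne_top n) h))
  simpa [SimpleGraph.diam] using ENat.toNat_le_toNat h (ENat.natCast_ne_top n)

theorem Walk.dist_lt_length_of_isClique_neighborSet (p : G.Walk x y) (hv : v ∈ p.support)
    (hvx : v ≠ x) (hvy : v ≠ y) (hclique : G.IsClique (G.neighborSet v)) :
    G.dist x y < p.length := by
  classical
  obtain ⟨a, hva, q, hq⟩ := Walk.exists_eq_cons_of_ne hvx (p.takeUntil v hv).reverse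
  obtain ⟨b, hvb, r, hr⟩ := Walk.exists_eq_cons_of_ne hvy (p.dropUntil v hv)
  have hlen : q.length + r.length + 2 = p.length := by
    have := congrArg Walk.length hq
    rw [← p.take_spec hv, Walk.length_append, hr]
    simp only [Walk.length_reverse, Walk.length_cons] at this ⊢
    omega
  -- the neighbours `a` and `b` of `v` on `p` are equal or adjacent, so `v` can be skipped
  by_cases hab : a = b
  · subst hab
    calc G.dist x y ≤ (q.reverse.append r).length := dist_le _
      _ < p.length := by simp only [Walk.length_append, Walk.length_reverse]; omega
  · calc G.dist x y ≤ (q.reverse.append (Walk.cons (hclique hva hvb hab) r)).length := dist_le _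
      _ < p.length := by
        simp only [Walk.length_append, Walk.length_reverse, Walk.length_cons]; omega

theorem Walk.mem_support_of_commonNeighbors_subset (p : G.Walk x y) (hp : p.length = 2)
    (hm : G.commonNeighbors x y ⊆ {z}) : z ∈ p.support := by
  have hmid : p.getVert 1 ∈ G.commonNeighbors x y := by
    refine G.mem_commonNeighbors.mpr ⟨?_, ?_⟩
    · simpa using p.adj_getVert_succ (i := 0) (by omega)
    · simpa [← hp] using (p.adj_getVert_succ (i := 1) (by omega)).symm
  rw [← Set.mem_singleton_iff.mp (hm hmid)]
  exact p.getVert_mem_support 1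

theorem IsStrongGeodeticSet.mem_of_isClique_neighborSet {S : Set V}
    (hS : G.IsStrongGeodeticSet S) (hv : G.IsClique (G.neighborSet v)) : v ∈ S := by
  obtain ⟨g, hg, hcover⟩ := hS
  obtain ⟨x, hx, y, hy, hvg⟩ := hcover v
  by_contra hvS
  have hvx : v ≠ x := by rintro rfl; exact hvS hx
  have hvy : v ≠ y := by rintro rfl; exact hvS hy
  exact (Walk.dist_lt_length_of_isClique_neighborSet _ hvg hvx hvy hv).ne' (hg x hx y hy)

theorem isStrongGeodeticSet_of_forall_mem_support {S : Set V} (hG : G.Preconnected)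
    (h : ∀ v, ∃ x ∈ S, ∃ y ∈ S,
      ∀ p : G.Walk x y, p.length = G.dist x y → v ∈ p.support) :
    G.IsStrongGeodeticSet S := by
  choose g hg using fun x y => (hG x y).exists_walk_length_eq_dist
  refine ⟨fun x _ y _ => g x y, fun x _ y _ => hg x y, fun v => ?_⟩
  obtain ⟨x, hx, y, hy, hv⟩ := h v
  exact ⟨x, hx, y, hy, hv _ (hg x y)⟩

theorem strongGeodeticNumber_eq_card [Fintype V] {S : Finset V} (hS : G.IsStrongGeodeticSet S)
    (hmin : ∀ T : Finset V, G.IsStrongGeodeticSet T → S.card ≤ T.card) :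
    G.strongGeodeticNumber = S.card :=
  le_antisymm (Nat.sInf_le ⟨S, hS, rfl⟩)
    (le_csInf ⟨_, S, hS, rfl⟩ (by rintro _ ⟨T, hT, rfl⟩; exact hmin T hT))

end SimpleGraph

namespace subdividedCompleteGraph

variable {k : ℕ}

theorem not_adj_inl_inl (u v : Fin k) :
    ¬(subdividedCompleteGraph k).Adj (.inl u) (.inl v) := id

theorem adj_inr_inr {e f : {e : Sym2 (Fin k) // ¬e.IsDiag}} :
    (subdividedCompleteGraph k).Adj (.inr e) (.inr f) ↔ e ≠ f := .rfl

def subdivisionVertex {u v : Fin k} (h : u ≠ v) : {e : Sym2 (Fin k) // ¬e.IsDiag} :=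
  ⟨s(u, v), Sym2.mk_isDiag_iff.not.mpr h⟩

theorem commonNeighbors_inl_inl_subset {u v : Fin k} (h : u ≠ v) :
    (subdividedCompleteGraph k).commonNeighbors (.inl u) (.inl v) ⊆
      {.inr (subdivisionVertex h)} := by
  rintro (w | e) hw <;> rw [mem_commonNeighbors] at hw
  · exact absurd hw.1 (not_adj_inl_inl u w)
  · exact congrArg Sum.inr (Subtype.ext ((Sym2.mem_and_mem_iff h).mp hw))

theorem edist_inl_inr_le_two (u : Fin k) (e : {e : Sym2 (Fin k) // ¬e.IsDiag}) :
    (subdividedCompleteGraph k).edist (.inl u) (.inr e) ≤ 2 := by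
  obtain ⟨⟨a, b⟩, hab⟩ := e
  by_cases hu : u ∈ s(a, b)
  · exact (edist_le_one_iff_adj_or_eq.mpr (.inl hu)).trans (by decide)
  · have hua : u ≠ a := by rintro rfl; exact hu (Sym2.mem_mk_left u b)
    have hne : s(u, a) ≠ s(a, b) := fun h => hu (h ▸ Sym2.mem_mk_left u a)
    exact edist_le_two_of_adj_of_adj (z := .inr (subdivisionVertex hua))
      (Sym2.mem_mk_left u a) (adj_inr_inr.mpr (mt Subtype.ext_iff.mp hne))

theorem ediam_le_two : (subdividedCompleteGraph k).ediam ≤ 2 := by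
  refine ediam_le_of_edist_le ?_
  rintro (u | e) (v | f)
  · by_cases h : u = v
    · simp [h]
    · exact edist_le_two_of_adj_of_adj (z := .inr (subdivisionVertex h))
        (Sym2.mem_mk_left u v) (Sym2.mem_mk_right u v)
  · exact edist_inl_inr_le_two u f
  · exact edist_comm.trans_le (edist_inl_inr_le_two v e)
  · have : (subdividedCompleteGraph k).edist (.inr e) (.inr f) ≤ 1 :=
      edist_le_one_iff_adj_or_eq.mpr ((ne_or_eq e f).imp adj_inr_inr.mpr (congrArg _))
    exact this.trans (by decide)

theorem preconnected : (subdividedCompleteGraph k).Preconnected :=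
  preconnected_of_ediam_ne_top (ne_top_of_le_ne_top (by decide) ediam_le_two)

theorem dist_inl_inl {u v : Fin k} (h : u ≠ v) :
    (subdividedCompleteGraph k).dist (.inl u) (.inl v) = 2 := by
  have : (subdividedCompleteGraph k).edist (.inl u) (.inl v) = 2 :=
    edist_eq_two_iff.mpr ⟨by simpa using h, not_adj_inl_inl u v,
      ⟨.inr (subdivisionVertex h), Sym2.mem_mk_left u v, Sym2.mem_mk_right u v⟩⟩
  simp [SimpleGraph.dist, this]

theorem isClique_neighborSet_inl (u : Fin k) :
    (subdividedCompleteGraph k).IsClique ((subdividedCompleteGraph k).neighborSet (.inl u)) := by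
  rintro (w | e) he (w' | f) hf hef
  · exact (not_adj_inl_inl u w he).elim
  · exact (not_adj_inl_inl u w he).elim
  · exact (not_adj_inl_inl u w' hf).elim
  · exact adj_inr_inr.mpr fun h => hef (congrArg _ h)

def originalVertices (k : ℕ) : Finset (Fin k ⊕ {e : Sym2 (Fin k) // ¬e.IsDiag}) :=
  Finset.univ.map .inl

@[simp]
theorem inl_mem_originalVertices (u : Fin k) : .inl u ∈ originalVertices k := by
  simp [originalVertices]

theorem card_originalVertices : (originalVertices k).card = k := by
  simp [originalVertices]

theorem isStrongGeodeticSet_originalVertices :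
    (subdividedCompleteGraph k).IsStrongGeodeticSet ↑(originalVertices k) := by
  refine isStrongGeodeticSet_of_forall_mem_support preconnected ?_
  rintro (u | ⟨⟨a, b⟩, hab⟩)
  · exact ⟨.inl u, by simp, .inl u, by simp, fun p _ => p.start_mem_support⟩
  · have hne : a ≠ b := fun h => hab (Sym2.mk_isDiag_iff.mpr h)
    refine ⟨.inl a, by simp, .inl b, by simp, fun p hp => ?_⟩
    exact p.mem_support_of_commonNeighbors_subset (hp.trans (dist_inl_inl hne))
      (commonNeighbors_inl_inl_subset hne)

theorem strongGeodeticNumber_eq : (subdividedCompleteGraph k).strongGeodeticNumber = k := by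
  refine (strongGeodeticNumber_eq_card isStrongGeodeticSet_originalVertices
    fun T hT => Finset.card_le_card fun x hx => ?_).trans card_originalVertices
  obtain ⟨u, -, rfl⟩ := Finset.mem_map.mp hx
  exact hT.mem_of_isClique_neighborSet (isClique_neighborSet_inl u)

end subdividedCompleteGraph

/-- For every `k ≥ 2`, the graph `G_k` is a connected graph with diameter `2`,
strong geodetic number `k`, and `k + C(k,2)` vertices, attaining equality in the bound
`n(G) ≤ sg(G) + C(sg(G),2)·(diam(G) - 1)`. -/
theorem exists_diam_two_extremal (k : ℕ) (hk : 2 ≤ k) :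
    (subdividedCompleteGraph k).Connected ∧
    (subdividedCompleteGraph k).diam = 2 ∧
    (subdividedCompleteGraph k).strongGeodeticNumber = k ∧
    Fintype.card (Fin k ⊕ {e : Sym2 (Fin k) // ¬e.IsDiag}) = k + k.choose 2 := by
  obtain ⟨u₀, u₁, hu⟩ := (Fin.nontrivial_iff_two_le.mpr hk).exists_pair_ne
  open subdividedCompleteGraph in
  refine ⟨(connected_iff _).mpr ⟨preconnected, ⟨.inl u₀⟩⟩,
    diam_eq_of_ediam_le_of_dist_eq ediam_le_two (dist_inl_inl hu), strongGeodeticNumber_eq, ?_⟩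
  rw [Fintype.card_sum, Fintype.card_fin, Sym2.card_subtype_not_diag, Fintype.card_fin]
end
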